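/- Let G' be a group with a normal subgroup N isomorphic to Q₈, and let a, b be commuting elements of G'. Then the number of pairs (γ₁, γ₂) ∈ N × N such that aγ₁ commutes with bγ₂ is 8, 16, 24, or 40. -/

import Mathlib

/-!
Conjugation by `a⁻¹` and by `b⁻¹` restricts to commuting automorphisms `α`, `β` of `N`, and
`aγ₁` commutes with `bγ₂` exactly when `β γ₁ * γ₂ = α γ₂ * γ₁`. Transported to `Q₈`, the count
of such pairs depends only on a commuting pair of endomorphisms of `Q₈`; these are determined
by the images of the generators `a 1` and `xa 0`, so the finitely many cases are checked by
evaluation.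
-/

theorem commute_mul_mul_iff {G : Type*} [Group G] {a b : G} (hab : Commute a b) (x y : G) :
    Commute (a * x) (b * y) ↔ b⁻¹ * x * b * y = a⁻¹ * y * a * x := by
  have hl : a * x * (b * y) = a * b * (b⁻¹ * x * b * y) := by group
  have hr : b * y * (a * x) = a * b * (a⁻¹ * y * a * x) := by rw [hab.eq]; group
  rw [Commute, SemiconjBy, hl, hr, mul_right_inj]

theorem Subgroup.card_commute_mul_mul_eq {G : Type*} [Group G] (N : Subgroup G) [N.Normal]
    {a b : G} (hab : Commute a b) :
    Nat.card {p : N × N // a * p.1 * (b * p.2) = b * p.2 * (a * p.1)} =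
      Nat.card {p : N × N //
        (MulAut.conjNormal b)⁻¹ p.1 * p.2 = (MulAut.conjNormal a)⁻¹ p.2 * p.1} :=
  Nat.card_congr <| Equiv.subtypeEquiv (Equiv.refl _) fun p =>
    (commute_mul_mul_iff hab _ _).trans (by simp [Subtype.ext_iff])

theorem MulAut.card_twisted_commute_congr {H K : Type*} [Group H] [Group K] (e : H ≃* K)
    (α β : MulAut H) :
    Nat.card {p : H × H // β p.1 * p.2 = α p.2 * p.1} =
      Nat.card {p : K × K // MulAut.congr e β p.1 * p.2 = MulAut.congr e α p.2 * p.1} :=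
  Nat.card_congr <| Equiv.subtypeEquiv (e.toEquiv.prodCongr e.toEquiv) fun p => by
    simp [← map_mul, e.injective.eq_iff]

namespace QuaternionGroup

variable {n : ℕ}

def ofImages {M : Type*} [Monoid M] (p q : M) : QuaternionGroup n → M
  | a i => p ^ i.val
  | xa i => q * p ^ i.val

theorem _root_.MonoidHom.eq_ofImages [NeZero n] {M : Type*} [Monoid M]
    (f : QuaternionGroup n →* M) : ⇑f = ofImages (f (a 1)) (f (xa 0)) := by
  have ha (i : ZMod (2 * n)) : a i = a 1 ^ i.val := by rw [a_one_pow, ZMod.natCast_zmod_val]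
  funext x
  rcases x with i | i
  · rw [ofImages, ← map_pow, ← ha]
  · rw [ofImages, ← map_pow, ← ha, ← map_mul, xa_mul_a, zero_add]

theorem card_twisted_commute_ofImages : ∀ p q p' q' : QuaternionGroup 2,
    (∀ x y : QuaternionGroup 2, ofImages p q (x * y) = ofImages p q x * ofImages p q y) →
    (∀ x y : QuaternionGroup 2, ofImages p' q' (x * y) = ofImages p' q' x * ofImages p' q' y) →
    (∀ x : QuaternionGroup 2, ofImages p q (ofImages p' q' x) = ofImages p' q' (ofImages p q x)) →
    (Finset.univ.filter fun z : QuaternionGroup 2 × QuaternionGroup 2 =>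
      ofImages p' q' z.1 * z.2 = ofImages p q z.2 * z.1).card ∈ ({8, 16, 24, 40} : Finset ℕ) := by
  decide

theorem card_twisted_commute_mem (f g : QuaternionGroup 2 →* QuaternionGroup 2)
    (hfg : ∀ x, f (g x) = g (f x)) :
    Nat.card {p : QuaternionGroup 2 × QuaternionGroup 2 // g p.1 * p.2 = f p.2 * p.1} ∈
      ({8, 16, 24, 40} : Set ℕ) := by
  rw [Nat.card_eq_fintype_card, Fintype.card_subtype, f.eq_ofImages, g.eq_ofImages]
  rw [f.eq_ofImages, g.eq_ofImages] at hfg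
  simpa only [← Finset.mem_coe, Finset.coe_insert, Finset.coe_singleton] using
    card_twisted_commute_ofImages _ _ _ _ (by simp [← f.eq_ofImages]) (by simp [← g.eq_ofImages])
      hfg

end QuaternionGroup

theorem stmt_11 (G' : Type*) [Group G'] (N : Subgroup G') [N.Normal]
    (hN : Nonempty (N ≃* QuaternionGroup 2))
    (a b : G') (hab : a * b = b * a) :
    Nat.card {p : N × N //
        (a * (p.1 : G')) * (b * (p.2 : G')) = (b * (p.2 : G')) * (a * (p.1 : G'))} ∈
      ({8, 16, 24, 40} : Set ℕ) := by
  obtain ⟨e⟩ := hN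
  rw [N.card_commute_mul_mul_eq hab, MulAut.card_twisted_commute_congr e]
  have hcomm :
      Commute (MulAut.congr e (MulAut.conjNormal a)⁻¹) (MulAut.congr e (MulAut.conjNormal b)⁻¹) :=
    ((Commute.map hab MulAut.conjNormal).inv_inv).map (MulAut.congr e)
  exact QuaternionGroup.card_twisted_commute_mem (MulAut.congr e _).toMonoidHom
    (MulAut.congr e _).toMonoidHom fun x => DFunLike.congr_fun hcomm.eq x
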